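/- Fix an integer I ≥ 2, a matrix D̂ ∈ ℝ^{I×I}, and i ∈ {1,…,I}. The insider's canonical objective J(·; D̂, i) is differentiable at every d ∈ ℝ^I, with gradient ∇J(d) = e_i − π̄(d; D̂) − D̂ · ( ∫_{ℝ^I} [ diag(p(d+x; D̂)) − p(d+x; D̂) p(d+x; D̂)ᵀ ] dγ_I(x) ) · d, where diag(v) denotes the diagonal matrix with diagonal v. In particular, any maximizer d of J(·; D̂, i) satisfies the first-order condition e_i − π̄(d; D̂) − D̂ · E[diag(p) − ppᵀ] · d = 0. -/

import Mathlib

/-!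
Writing `J(d) = d_i − ⟨π̄(d), d⟩`, everything reduces to differentiating
`π̄(d) = ∫ softmax(D̂ᵀ(d + x) − c) dγ(x)`, where `c_j = ½‖d̂⁽ʲ⁾‖²`. The softmax has Jacobian
`diag(p) − ppᵀ`, whose operator norm is at most 2 uniformly, so differentiation under the
integral sign is justified by dominated convergence and gives `Dπ̄(d) = Σ̄(d) D̂ᵀ`, with `Σ̄(d)`
the averaged Jacobian. The product rule then yields `v ↦ v_i − ⟨π̄(d), v⟩ − ⟨Σ̄(d) D̂ᵀ v, d⟩`,
and the symmetry of `Σ̄(d)` rewrites the last term as `⟨D̂ Σ̄(d) d, v⟩`. A global maximizer is a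
critical point.
-/

open MeasureTheory ProbabilityTheory Matrix

noncomputable section

/-- The standard Gaussian measure `γ_I` on `ℝ^I` (mean 0, identity covariance). -/
def stdGaussian (I : ℕ) : Measure (Fin I → ℝ) :=
  Measure.pi fun _ => gaussianReal 0 1

/-- The posterior map `p(·; D̂)`:
`p_j(ω; D̂) = exp(⟨d̂⁽ʲ⁾, ω⟩ − ½‖d̂⁽ʲ⁾‖²) / Σ_k exp(⟨d̂⁽ᵏ⁾, ω⟩ − ½‖d̂⁽ᵏ⁾‖²)`,
where `d̂⁽ʲ⁾ = D̂ e_j` is the `j`-th column of `D̂`. -/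
def postMap (I : ℕ) (D : Matrix (Fin I) (Fin I) ℝ) (ω : Fin I → ℝ) : Fin I → ℝ :=
  fun j => Real.exp ((∑ k, D k j * ω k) - (∑ k, (D k j) ^ 2) / 2) /
    ∑ l, Real.exp ((∑ k, D k l * ω k) - (∑ k, (D k l) ^ 2) / 2)

/-- `π̄(d; D̂) = ∫ p(d + x; D̂) dγ_I(x)`. -/
def postBar (I : ℕ) (D : Matrix (Fin I) (Fin I) ℝ) (d : Fin I → ℝ) : Fin I → ℝ :=
  fun j => ∫ x, postMap I D (d + x) j ∂(stdGaussian I)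

/-- The insider's canonical objective `J(d; D̂, i) = ⟨e_i, d⟩ − ⟨π̄(d; D̂), d⟩`. -/
def Jobj (I : ℕ) (D : Matrix (Fin I) (Fin I) ℝ) (i : Fin I) (d : Fin I → ℝ) : ℝ :=
  d i - ∑ j, postBar I D d j * d j

/-- The continuous linear functional `v ↦ ⟨g, v⟩ = Σ_j g_j v_j` on `ℝ^I`. -/
def dotCLM {I : ℕ} (g : Fin I → ℝ) : (Fin I → ℝ) →L[ℝ] ℝ :=
  ∑ j, g j • (ContinuousLinearMap.proj j : (Fin I → ℝ) →L[ℝ] ℝ)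

/-- The matrix `∫ [diag(p(d+x; D̂)) − p(d+x; D̂) p(d+x; D̂)ᵀ] dγ_I(x)` (entrywise integral). -/
def covMat (I : ℕ) (D : Matrix (Fin I) (Fin I) ℝ) (d : Fin I → ℝ) :
    Matrix (Fin I) (Fin I) ℝ :=
  Matrix.of fun j k =>
    ∫ x, (Matrix.diagonal (postMap I D (d + x)) -
      Matrix.vecMulVec (postMap I D (d + x)) (postMap I D (d + x))) j k ∂(stdGaussian I)

/-- The claimed gradient `∇J(d) = e_i − π̄(d; D̂) − D̂·(∫ [diag(p) − ppᵀ] dγ_I)·d`. -/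
def gradJ (I : ℕ) (D : Matrix (Fin I) (Fin I) ℝ) (i : Fin I) (d : Fin I → ℝ) :
    Fin I → ℝ :=
  (Pi.single i 1 : Fin I → ℝ) - postBar I D d - D.mulVec ((covMat I D d).mulVec d)

def Matrix.mulVecCLM {m n : Type*} [Fintype n] (A : Matrix m n ℝ) : (n → ℝ) →L[ℝ] m → ℝ :=
  (mulVecLin A).toContinuousLinearMap

@[simp]
lemma Matrix.mulVecCLM_apply {m n : Type*} [Fintype n] (A : Matrix m n ℝ) (v : n → ℝ) :
    A.mulVecCLM v = A *ᵥ v := rfl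

section Softmax

variable {ι : Type*} [Fintype ι]

def softmax (z : ι → ℝ) : ι → ℝ := fun j => Real.exp (z j) / ∑ l, Real.exp (z l)

def softmaxJacobian [DecidableEq ι] (z : ι → ℝ) : Matrix ι ι ℝ :=
  diagonal (softmax z) - vecMulVec (softmax z) (softmax z)

lemma sum_exp_pos (z : ι → ℝ) (j : ι) : 0 < ∑ l, Real.exp (z l) :=
  Finset.sum_pos (fun _ _ => Real.exp_pos _) ⟨j, Finset.mem_univ j⟩

lemma softmax_nonneg (z : ι → ℝ) (j : ι) : 0 ≤ softmax z j :=
  div_nonneg (Real.exp_pos _).le (sum_exp_pos z j).le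

lemma softmax_le_one (z : ι → ℝ) (j : ι) : softmax z j ≤ 1 :=
  (div_le_one (sum_exp_pos z j)).2 <|
    Finset.single_le_sum (fun l _ => (Real.exp_pos (z l)).le) (Finset.mem_univ j)

lemma sum_softmax [Nonempty ι] (z : ι → ℝ) : ∑ j, softmax z j = 1 := by
  simp only [softmax, ← Finset.sum_div]
  exact div_self (sum_exp_pos z (Classical.arbitrary ι)).ne'

lemma continuous_softmax : Continuous (softmax : (ι → ℝ) → ι → ℝ) :=
  continuous_pi fun j => by
    unfold softmax
    exact (continuous_apply j).rexp.div (by fun_prop) fun z => (sum_exp_pos z j).ne'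

lemma softmaxJacobian_mulVec [DecidableEq ι] (z w : ι → ℝ) :
    softmaxJacobian z *ᵥ w = fun j => softmax z j * (w j - ∑ l, softmax z l * w l) := by
  ext j
  simp [softmaxJacobian, sub_mulVec, vecMulVec_mulVec, mulVec_diagonal, dotProduct, mul_sub]

lemma transpose_softmaxJacobian [DecidableEq ι] (z : ι → ℝ) :
    (softmaxJacobian z)ᵀ = softmaxJacobian z := by
  simp [softmaxJacobian, transpose_sub, transpose_vecMulVec]

lemma hasFDerivAt_softmax [DecidableEq ι] (z : ι → ℝ) :
    HasFDerivAt softmax (softmaxJacobian z).mulVecCLM z := by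
  refine hasFDerivAt_pi'' fun j => ?_
  have hS := sum_exp_pos z j
  have h := ((hasFDerivAt_apply j z).exp).mul ((hasFDerivAt_inv hS.ne').comp z
    (HasFDerivAt.fun_sum fun l _ => (hasFDerivAt_apply l z).exp))
  refine (h.congr_fderiv ?_).congr_of_eventuallyEq (.of_forall fun x => div_eq_mul_inv _ _)
  ext w
  simp only [Function.comp_apply, _root_.add_apply, _root_.smul_apply,
    ContinuousLinearMap.comp_apply, _root_.sum_apply, ContinuousLinearMap.proj_apply, smul_eq_mul,
    ContinuousLinearMap.toSpanSingleton_apply, mulVecCLM_apply, softmaxJacobian_mulVec, softmax,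
    div_mul_eq_mul_div, ← Finset.sum_div]
  field_simp
  ring

lemma norm_mulVecCLM_softmaxJacobian_le [DecidableEq ι] (z : ι → ℝ) :
    ‖(softmaxJacobian z).mulVecCLM‖ ≤ 2 := by
  refine ContinuousLinearMap.opNorm_le_bound _ zero_le_two fun w => ?_
  refine (pi_norm_le_iff_of_nonneg (by positivity)).2 fun j => ?_
  have : Nonempty ι := ⟨j⟩
  have hmean : |∑ l, softmax z l * w l| ≤ ‖w‖ := calc
    |∑ l, softmax z l * w l| ≤ ∑ l, softmax z l * ‖w‖ := by
      refine (Finset.abs_sum_le_sum_abs _ _).trans (Finset.sum_le_sum fun l _ => ?_)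
      rw [abs_mul, abs_of_nonneg (softmax_nonneg z l)]
      exact mul_le_mul_of_nonneg_left (norm_le_pi_norm w l) (softmax_nonneg z l)
    _ = ‖w‖ := by rw [← Finset.sum_mul, sum_softmax, one_mul]
  have hdiff : |w j - ∑ l, softmax z l * w l| ≤ 2 * ‖w‖ := by
    have := norm_le_pi_norm w j
    rw [Real.norm_eq_abs] at this
    linarith [abs_sub (w j) (∑ l, softmax z l * w l)]
  simp only [mulVecCLM_apply, softmaxJacobian_mulVec,
    Real.norm_eq_abs, abs_mul, abs_of_nonneg (softmax_nonneg z j)]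
  nlinarith [softmax_le_one z j, softmax_nonneg z j, abs_nonneg (w j - ∑ l, softmax z l * w l)]

lemma continuous_softmaxJacobian [DecidableEq ι] :
    Continuous (softmaxJacobian : (ι → ℝ) → Matrix ι ι ℝ) := by
  unfold softmaxJacobian
  have := continuous_softmax (ι := ι)
  fun_prop

lemma continuous_mulVecCLM_softmaxJacobian [DecidableEq ι] :
    Continuous fun z : ι → ℝ => (softmaxJacobian z).mulVecCLM :=
  continuous_clm_apply.2 fun w => by
    simpa only [mulVecCLM_apply] using continuous_softmaxJacobian.matrix_mulVec continuous_const


lemma abs_softmaxJacobian_apply_le [DecidableEq ι] (z : ι → ℝ) (j k : ι) :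
    |softmaxJacobian z j k| ≤ 1 := by
  have hj := softmax_nonneg z j
  have hk := softmax_nonneg z k
  have hj1 := softmax_le_one z j
  have hk1 := softmax_le_one z k
  simp only [softmaxJacobian, Matrix.sub_apply, diagonal_apply, vecMulVec_apply]
  split_ifs <;> rw [abs_le] <;> constructor <;> nlinarith

end Softmax

section Integral

theorem hasFDerivAt_integral_comp_add {E F : Type*} [NormedAddCommGroup E] [NormedSpace ℝ E]
    [MeasurableSpace E] [OpensMeasurableSpace E] [SecondCountableTopology E]
    [NormedAddCommGroup F] [NormedSpace ℝ F] {μ : Measure E} [IsFiniteMeasure μ]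
    {f : E → F} {f' : E → E →L[ℝ] F} {C : ℝ} (hf : ∀ ω, HasFDerivAt f (f' ω) ω)
    (hf' : Continuous f') (hC : ∀ ω, ‖f' ω‖ ≤ C) {d : E}
    (hint : Integrable (fun x => f (d + x)) μ) :
    HasFDerivAt (fun d => ∫ x, f (d + x) ∂μ) (∫ x, f' (d + x) ∂μ) d := by
  have hcont : Continuous f := continuous_iff_continuousAt.2 fun ω => (hf ω).continuousAt
  refine hasFDerivAt_integral_of_dominated_of_fderiv_le (s := Set.univ)
    (F' := fun d x => f' (d + x)) (bound := fun _ => C)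
    Filter.univ_mem (.of_forall fun d' => ?_) hint ?_ (ae_of_all _ fun x d' _ => hC _)
    (integrable_const C) (ae_of_all _ fun x d' _ => (hasFDerivAt_comp_add_right x).2 (hf _))
  · exact (hcont.comp (continuous_const_add d')).aestronglyMeasurable
  · exact (hf'.comp (continuous_const_add d)).aestronglyMeasurable

lemma integral_mulVec {α m n : Type*} [MeasurableSpace α] {μ : Measure α} [Fintype m]
    [Fintype n] {A : α → Matrix m n ℝ} (hA : ∀ j k, Integrable (fun x => A x j k) μ)
    (w : n → ℝ) :
    ∫ x, A x *ᵥ w ∂μ = (Matrix.of fun j k => ∫ x, A x j k ∂μ) *ᵥ w := by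
  ext j
  have hterm : ∀ j k, Integrable (fun x => A x j k * w k) μ := fun j k => (hA j k).mul_const _
  rw [eval_integral (f := fun x => A x *ᵥ w)
    fun j => integrable_finsetSum _ fun k _ => hterm j k]
  simp only [mulVec, dotProduct, of_apply]
  rw [integral_finsetSum _ fun k _ => hterm j k]
  exact Finset.sum_congr rfl fun k _ => integral_mul_const _ _

end Integral

instance (I : ℕ) : IsProbabilityMeasure (stdGaussian I) := by
  unfold _root_.stdGaussian
  infer_instance

section Posterior

variable {I : ℕ} (D : Matrix (Fin I) (Fin I) ℝ)

def postLogit (ω : Fin I → ℝ) : Fin I → ℝ :=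
  Dᵀ *ᵥ ω - fun j => (∑ k, D k j ^ 2) / 2

lemma postMap_eq_softmax_comp : postMap I D = softmax ∘ postLogit D := rfl

lemma covMat_eq_integral_softmaxJacobian (d : Fin I → ℝ) :
    covMat I D d = Matrix.of fun j k =>
      ∫ x, softmaxJacobian (postLogit D (d + x)) j k ∂(stdGaussian I) := rfl

lemma continuous_postLogit : Continuous (postLogit D) := by
  unfold postLogit
  fun_prop

lemma hasFDerivAt_postLogit (ω : Fin I → ℝ) :
    HasFDerivAt (postLogit D) Dᵀ.mulVecCLM ω :=
  Dᵀ.mulVecCLM.hasFDerivAt.sub_const _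

lemma hasFDerivAt_postMap (ω : Fin I → ℝ) :
    HasFDerivAt (postMap I D) ((softmaxJacobian (postLogit D ω)).mulVecCLM
      ∘L Dᵀ.mulVecCLM) ω := by
  rw [postMap_eq_softmax_comp]
  exact (hasFDerivAt_softmax _).comp ω (hasFDerivAt_postLogit D ω)

lemma integrable_postMap_comp_add (d : Fin I → ℝ) :
    Integrable (fun x => postMap I D (d + x)) (stdGaussian I) :=
  .of_bound ((continuous_softmax.comp (continuous_postLogit D)).comp
    (continuous_const_add d)).aestronglyMeasurable 1 <| ae_of_all _ fun x =>
      (pi_norm_le_iff_of_nonneg zero_le_one).2 fun j => by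
        rw [Real.norm_eq_abs]
        exact (abs_of_nonneg (softmax_nonneg (postLogit D (d + x)) j)).trans_le
          (softmax_le_one _ j)

lemma postBar_eq_integral (d : Fin I → ℝ) :
    postBar I D d = ∫ x, postMap I D (d + x) ∂(stdGaussian I) :=
  funext fun j => (eval_integral (integrable_postMap_comp_add D d).eval j).symm

lemma hasFDerivAt_postBar (d : Fin I → ℝ) :
    HasFDerivAt (postBar I D) ((covMat I D d).mulVecCLM
      ∘L Dᵀ.mulVecCLM) d := by
  set f' : (Fin I → ℝ) → (Fin I → ℝ) →L[ℝ] Fin I → ℝ := fun ω =>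
    (softmaxJacobian (postLogit D ω)).mulVecCLM
      ∘L Dᵀ.mulVecCLM
  have hf' : Continuous f' :=
    (continuous_mulVecCLM_softmaxJacobian.comp (continuous_postLogit D)).clm_comp continuous_const
  have hC : ∀ ω, ‖f' ω‖ ≤ 2 * ‖Dᵀ.mulVecCLM‖ := fun ω =>
    (ContinuousLinearMap.opNorm_comp_le _ _).trans <|
      mul_le_mul_of_nonneg_right (norm_mulVecCLM_softmaxJacobian_le _) (norm_nonneg _)
  have hderiv := hasFDerivAt_integral_comp_add (hasFDerivAt_postMap D) hf' hC
    (integrable_postMap_comp_add D d)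
  rw [funext (postBar_eq_integral D)]
  refine hderiv.congr_fderiv (ContinuousLinearMap.ext fun v => ?_)
  have hint : Integrable (fun x => f' (d + x)) (stdGaussian I) :=
    .of_bound (hf'.comp (continuous_const_add d)).aestronglyMeasurable _ (ae_of_all _ fun _ => hC _)
  have hentry : ∀ j k, Integrable (fun x => softmaxJacobian (postLogit D (d + x)) j k)
      (stdGaussian I) := fun j k =>
    .of_bound (((continuous_softmaxJacobian.comp (continuous_postLogit D)).comp
      (continuous_const_add d)).matrix_elem j k).aestronglyMeasurable 1
      (ae_of_all _ fun x => abs_softmaxJacobian_apply_le _ j k)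
  rw [ContinuousLinearMap.integral_apply hint]
  simp only [f', ContinuousLinearMap.comp_apply, mulVecCLM_apply]
  rw [integral_mulVec hentry, covMat_eq_integral_softmaxJacobian]

lemma transpose_covMat (d : Fin I → ℝ) : (covMat I D d)ᵀ = covMat I D d := by
  ext j k
  simp only [covMat_eq_integral_softmaxJacobian, transpose_apply, of_apply]
  congr 1 with x
  exact congr($(transpose_softmaxJacobian (postLogit D (d + x))) j k)

end Posterior

section Gradient

lemma dotCLM_apply {n : ℕ} (g v : Fin n → ℝ) : dotCLM g v = g ⬝ᵥ v := by
  simp [dotCLM, dotProduct]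

lemma eq_zero_of_dotCLM_eq_zero {n : ℕ} {g : Fin n → ℝ} (h : dotCLM g = 0) : g = 0 := by
  ext m
  simpa [dotCLM_apply] using congr($h (Pi.single m 1))

theorem HasFDerivAt.dotProduct {E : Type*} [NormedAddCommGroup E] [NormedSpace ℝ E] {n : ℕ}
    {u v : E → Fin n → ℝ} {u' v' : E →L[ℝ] Fin n → ℝ} {x : E} (hu : HasFDerivAt u u' x)
    (hv : HasFDerivAt v v' x) :
    HasFDerivAt (fun y => u y ⬝ᵥ v y) (dotCLM (u x) ∘L v' + dotCLM (v x) ∘L u') x := by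
  refine (HasFDerivAt.fun_sum fun j _ =>
    (hasFDerivAt_pi'.1 hu j).mul (hasFDerivAt_pi'.1 hv j)).congr_fderiv ?_
  ext w
  simp only [Finset.sum_add_distrib, _root_.add_apply, _root_.sum_apply, _root_.smul_apply,
    ContinuousLinearMap.comp_apply, ContinuousLinearMap.proj_apply, smul_eq_mul, dotCLM_apply]
  rfl

lemma dotProduct_mulVec_transpose_mulVec {m n R : Type*} [Fintype m] [Fintype n] [CommSemiring R]
    {C : Matrix n n R} (hC : Cᵀ = C) (D : Matrix m n R) (d : n → R) (v : m → R) :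
    d ⬝ᵥ (C *ᵥ (Dᵀ *ᵥ v)) = (D *ᵥ (C *ᵥ d)) ⬝ᵥ v := by
  rw [dotProduct_mulVec, ← mulVec_transpose, hC, dotProduct_mulVec, vecMul_transpose]

end Gradient

theorem J_differentiable_with_gradient_general (I : ℕ)
    (D : Matrix (Fin I) (Fin I) ℝ) (i : Fin I) :
    (∀ d : Fin I → ℝ, HasFDerivAt (Jobj I D i) (dotCLM (gradJ I D i d)) d) ∧
      ∀ d : Fin I → ℝ, (∀ d' : Fin I → ℝ, Jobj I D i d' ≤ Jobj I D i d) →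
        gradJ I D i d = 0 := by
  have hJ : ∀ d, HasFDerivAt (Jobj I D i) (dotCLM (gradJ I D i d)) d := fun d => by
    have h := (hasFDerivAt_apply i d).sub ((hasFDerivAt_postBar D d).dotProduct (hasFDerivAt_id d))
    refine h.congr_fderiv (ContinuousLinearMap.ext fun v => ?_)
    simp only [_root_.sub_apply, _root_.add_apply,
      ContinuousLinearMap.comp_apply, ContinuousLinearMap.id_apply, ContinuousLinearMap.proj_apply,
      id_eq, dotCLM_apply,
      mulVecCLM_apply,
      dotProduct_mulVec_transpose_mulVec (transpose_covMat D d), gradJ, sub_dotProduct,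
      single_one_dotProduct]
    ring
  exact ⟨hJ, fun d hmax => eq_zero_of_dotCLM_eq_zero
    (IsLocalMax.hasFDerivAt_eq_zero (.of_forall hmax) (hJ d))⟩

/-- The insider's canonical objective `J(·; D̂, i)` is differentiable at every `d`, with the
stated gradient; in particular, any maximizer satisfies the first-order condition
`e_i − π̄(d; D̂) − D̂·E[diag(p) − ppᵀ]·d = 0`. -/
theorem J_differentiable_with_gradient (I : ℕ) (hI : 2 ≤ I)
    (D : Matrix (Fin I) (Fin I) ℝ) (i : Fin I) :
    (∀ d : Fin I → ℝ, HasFDerivAt (Jobj I D i) (dotCLM (gradJ I D i d)) d) ∧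
      ∀ d : Fin I → ℝ, (∀ d' : Fin I → ℝ, Jobj I D i d' ≤ Jobj I D i d) →
        gradJ I D i d = 0 :=
  J_differentiable_with_gradient_general I D i
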